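/- arXiv:1810.10735 — 3 statements merged into one kernel-verified Lean document; each statement's English description precedes it below -/
import Mathlib

section
/- Let Phi be the map on the closed quarter disk {(r cos(phi), r sin(phi)) : 0 <= r <= 1, 0 <= phi <= pi/2} defined in polar coordinates by Phi(r,phi) = (r, 2 phi) (doubling the angle), mapping onto the closed half disk. Then Phi is a bijective Lipschitz map with Lipschitz inverse, but for every 0 < h <= 1 the affine interpolant of Phi on the triangle T = conv{(0,0),(h,0),(0,h)} (the affine map agreeing with Phi at the three vertices) maps T into the line segment [-h,h] x {0}, hence is not injective on T. -/
open Complex Set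

/-- The angle-doubling map on the closed quarter disk, written in complex
coordinates: `Φ` maps the point with polar coordinates `(r, φ)` to the point
with polar coordinates `(r, 2φ)`. -/
noncomputable def Phi : ℂ → ℂ := fun z => if z = 0 then 0 else z ^ 2 / (‖z‖ : ℂ)

/-- The closed quarter disk `{(r cos φ, r sin φ) : 0 ≤ r ≤ 1, 0 ≤ φ ≤ π/2}`. -/
noncomputable def quarterDisk : Set ℂ :=
  {z : ℂ | ‖z‖ ≤ 1 ∧ 0 ≤ z.re ∧ 0 ≤ z.im}

/-- The closed half disk `{(r cos φ, r sin φ) : 0 ≤ r ≤ 1, 0 ≤ φ ≤ π}`. -/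
noncomputable def halfDisk : Set ℂ :=
  {z : ℂ | ‖z‖ ≤ 1 ∧ 0 ≤ z.im}

/-!
`Φ z = z ^ 2 / ‖z‖` preserves norms, is multiplicative and commutes with conjugation, so
`Φ z * conj (Φ w) = Φ (z * conj w)`. For `z, w` in the quarter disk, `z * conj w` lies in the
closed right half-plane, where `Φ` can only decrease the real part; by
`‖z - w‖² = ‖z‖² + ‖w‖² - 2 Re (z * conj w)` this gives `‖z - w‖ ≤ ‖Φ z - Φ w‖`, hence
injectivity and a Lipschitz inverse. Writing `Φ z = z * (z / ‖z‖)` gives the Lipschitz bound `3`.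
The interpolant sends the midpoint of the hypotenuse of `T` to the midpoint of `h` and `-h`,
which is also the image `0` of the vertex `0`.
-/

open ComplexConjugate

theorem Phi_eq_sq_div (z : ℂ) : Phi z = z ^ 2 / ‖z‖ := by
  by_cases hz : z = 0 <;> simp [Phi, hz]

theorem norm_Phi (z : ℂ) : ‖Phi z‖ = ‖z‖ := by
  rw [Phi_eq_sq_div, norm_div, norm_pow, Complex.norm_real, norm_norm, sq, mul_self_div_self]

theorem Phi_mul (z w : ℂ) : Phi (z * w) = Phi z * Phi w := by
  simp only [Phi_eq_sq_div, mul_pow, norm_mul, Complex.ofReal_mul, mul_div_mul_comm]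

theorem Phi_conj (z : ℂ) : Phi (conj z) = conj (Phi z) := by
  simp [Phi_eq_sq_div, map_div₀]

theorem Phi_ofReal {r : ℝ} (hr : 0 ≤ r) : Phi r = r := by
  rw [Phi_eq_sq_div, Complex.norm_real, Real.norm_of_nonneg hr, sq, mul_self_div_self]

theorem Phi_zero : Phi 0 = 0 := by
  simp [Phi]

theorem Phi_I : Phi I = -1 := by
  simp [Phi_eq_sq_div]

theorem Phi_ofReal_mul_exp {r : ℝ} (hr : 0 ≤ r) (t : ℝ) :
    Phi (r * exp (t * I)) = r * exp ((2 * t : ℝ) * I) := by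
  rw [Phi_eq_sq_div, norm_mul, Complex.norm_exp_ofReal_mul_I, mul_one, Complex.norm_real,
    Real.norm_of_nonneg hr, mul_pow, sq (r : ℂ), mul_div_right_comm, mul_self_div_self,
    ← Complex.exp_nat_mul]
  push_cast
  ring_nf

theorem normSq_Phi (z : ℂ) : Complex.normSq (Phi z) = Complex.normSq z := by
  rw [Complex.normSq_eq_norm_sq, Complex.normSq_eq_norm_sq, norm_Phi]

theorem re_Phi_le {u : ℂ} (hu : 0 ≤ u.re) : (Phi u).re ≤ u.re := by
  rw [Phi_eq_sq_div, Complex.div_ofReal_re, sq, Complex.mul_re]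
  rcases (norm_nonneg u).eq_or_lt with h0 | hpos
  · rw [← h0, div_zero]; exact hu
  · rw [div_le_iff₀ hpos]
    nlinarith [mul_le_mul_of_nonneg_left (Complex.re_le_norm u) hu, sq_nonneg u.im]

theorem norm_sub_le_norm_Phi_sub {z w : ℂ} (hzw : 0 ≤ (z * conj w).re) :
    ‖z - w‖ ≤ ‖Phi z - Phi w‖ := by
  have hre : (Phi z * conj (Phi w)).re ≤ (z * conj w).re := by
    rw [← Phi_conj, ← Phi_mul]; exact re_Phi_le hzw
  have hsq : ‖z - w‖ ^ 2 ≤ ‖Phi z - Phi w‖ ^ 2 := by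
    simp only [Complex.sq_norm, Complex.normSq_sub, normSq_Phi]
    linarith
  exact (pow_le_pow_iff_left₀ (norm_nonneg _) (norm_nonneg _) two_ne_zero).mp hsq

theorem lipschitzWith_Phi : LipschitzWith 3 Phi := by
  refine LipschitzWith.of_dist_le_mul fun z w => ?_
  simp only [Complex.dist_eq, NNReal.coe_ofNat]
  set σ : ℂ → ℂ := fun z => z / ‖z‖
  have norm_σ_le (z : ℂ) : ‖σ z‖ ≤ 1 := by
    simp only [σ, norm_div, Complex.norm_real, norm_norm]; exact div_self_le_one _
  have norm_mul_σ (z : ℂ) : ‖z‖ * σ z = z :=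
    mul_div_cancel_of_imp' fun h => by simpa using h
  have split : Phi z - Phi w = (z - w) * σ z + σ w * ((‖w‖ - ‖z‖ : ℝ) * σ z + (z - w)) := by
    have hz := norm_mul_σ z
    have hw := norm_mul_σ w
    simp only [Phi_eq_sq_div, sq, mul_div_assoc]
    push_cast
    linear_combination (σ w) * hz - σ z * hw
  calc ‖Phi z - Phi w‖
      ≤ ‖z - w‖ * ‖σ z‖ + ‖σ w‖ * (|‖w‖ - ‖z‖| * ‖σ z‖ + ‖z - w‖) := by
        rw [split]
        refine (norm_add_le _ _).trans ?_
        rw [norm_mul, norm_mul]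
        gcongr
        exact (norm_add_le _ _).trans_eq (by rw [norm_mul, Complex.norm_real, Real.norm_eq_abs])
    _ ≤ ‖z - w‖ * 1 + 1 * (‖z - w‖ * 1 + ‖z - w‖) := by
        gcongr
        · exact norm_σ_le z
        · exact norm_σ_le w
        · exact (abs_norm_sub_norm_le w z).trans_eq (norm_sub_rev w z)
        · exact norm_σ_le z
    _ = 3 * ‖z - w‖ := by ring

theorem re_mul_conj_nonneg {z w : ℂ} (hz : z ∈ quarterDisk) (hw : w ∈ quarterDisk) :
    0 ≤ (z * conj w).re := by
  obtain ⟨-, hz₁, hz₂⟩ := hz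
  obtain ⟨-, hw₁, hw₂⟩ := hw
  simp only [Complex.mul_re, Complex.conj_re, Complex.conj_im]
  nlinarith

theorem mapsTo_Phi : MapsTo Phi quarterDisk halfDisk := by
  rintro z ⟨hz, hre, him⟩
  refine ⟨(norm_Phi z).trans_le hz, ?_⟩
  rw [Phi_eq_sq_div, Complex.div_ofReal_im, sq, Complex.mul_im]
  positivity

theorem injOn_Phi : InjOn Phi quarterDisk := fun z hz w hw hzw =>
  norm_sub_eq_zero_iff.mp <| le_antisymm
    ((norm_sub_le_norm_Phi_sub (re_mul_conj_nonneg hz hw)).trans_eq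
      (by rw [hzw, sub_self, norm_zero]))
    (norm_nonneg _)

theorem surjOn_Phi : SurjOn Phi quarterDisk halfDisk := by
  rintro w ⟨hw, him⟩
  refine ⟨‖w‖ * exp ((w.arg / 2 : ℝ) * I), ⟨?_, ?_, ?_⟩, ?_⟩
  · rwa [norm_mul, Complex.norm_real, norm_norm, Complex.norm_exp_ofReal_mul_I, mul_one]
  · rw [Complex.re_ofReal_mul, Complex.exp_ofReal_mul_I_re]
    exact mul_nonneg (norm_nonneg w) (Real.cos_nonneg_of_mem_Icc
      ⟨by linarith [Complex.neg_pi_lt_arg w], by linarith [Complex.arg_le_pi w]⟩)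
  · rw [Complex.im_ofReal_mul, Complex.exp_ofReal_mul_I_im]
    exact mul_nonneg (norm_nonneg w) (Real.sin_nonneg_of_nonneg_of_le_pi
      (by linarith [Complex.arg_nonneg_iff.mpr him])
      (by linarith [Complex.arg_le_pi w, Real.pi_pos]))
  · rw [Phi_ofReal_mul_exp (norm_nonneg w), mul_div_cancel₀ _ two_ne_zero,
      Complex.norm_mul_exp_arg_mul_I]

theorem AffineMap.not_injOn_convexHull_of_apply_eq_midpoint {E F : Type*}
    [AddCommGroup E] [Module ℝ E] [AddCommGroup F] [Module ℝ F] (A : E →ᵃ[ℝ] F) {a b c : E}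
    (hA : A a = midpoint ℝ (A b) (A c)) (hne : a ≠ midpoint ℝ b c) :
    ¬ InjOn A (convexHull ℝ {a, b, c}) := by
  intro hinj
  have hmem : midpoint ℝ b c ∈ convexHull ℝ {a, b, c} :=
    (convex_convexHull ℝ _).segment_subset (subset_convexHull ℝ _ (by simp))
      (subset_convexHull ℝ _ (by simp)) (midpoint_mem_segment b c)
  exact hne (hinj (subset_convexHull ℝ _ (by simp)) hmem (by rw [hA, AffineMap.map_midpoint]))

/-- `Φ` is a bijective Lipschitz map from the quarter disk onto the
half disk with Lipschitz inverse, but for every `0 < h ≤ 1` the affine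
interpolant of `Φ` on the triangle `T = conv{0, h, h i}` maps `T` into the
segment `[-h, h] × {0}` and is not injective on `T`. -/
theorem stmt_1 :
    (Set.BijOn Phi quarterDisk halfDisk) ∧
    (∃ K : NNReal, LipschitzOnWith K Phi quarterDisk) ∧
    (∃ K' : ℝ, ∀ z ∈ quarterDisk, ∀ w ∈ quarterDisk,
      dist z w ≤ K' * dist (Phi z) (Phi w)) ∧
    (∀ h : ℝ, 0 < h → h ≤ 1 →
      ∀ A : ℂ →ᵃ[ℝ] ℂ,
        A 0 = Phi 0 → A (h : ℂ) = Phi (h : ℂ) →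
        A (h * Complex.I) = Phi (h * Complex.I) →
        (A '' (convexHull ℝ {(0 : ℂ), (h : ℂ), (h * Complex.I)}) ⊆
            segment ℝ (-(h : ℂ)) (h : ℂ)) ∧
          ¬ Set.InjOn A (convexHull ℝ {(0 : ℂ), (h : ℂ), (h * Complex.I)})) := by
  refine ⟨⟨mapsTo_Phi, injOn_Phi, surjOn_Phi⟩, ⟨3, lipschitzWith_Phi.lipschitzOnWith⟩,
    ⟨1, fun z hz w hw => ?_⟩, fun h hh _ A hA₀ hA₁ hA₂ => ?_⟩
  · simpa [Complex.dist_eq] using norm_sub_le_norm_Phi_sub (re_mul_conj_nonneg hz hw)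
  have hmid : midpoint ℝ (h : ℂ) (-h) = 0 := midpoint_self_neg ℝ _
  rw [Phi_zero] at hA₀
  rw [Phi_ofReal hh.le] at hA₁
  rw [Phi_mul, Phi_ofReal hh.le, Phi_I, mul_neg_one] at hA₂
  constructor
  · rw [AffineMap.image_convexHull, image_insert_eq, image_insert_eq, image_singleton,
      hA₀, hA₁, hA₂]
    refine convexHull_min (insert_subset_iff.mpr ⟨?_, ?_⟩) (convex_segment _ _)
    · exact midpoint_neg_self ℝ (h : ℂ) ▸ midpoint_mem_segment _ _
    · simp [left_mem_segment, right_mem_segment, pair_subset_iff]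
  · refine A.not_injOn_convexHull_of_apply_eq_midpoint (by rw [hA₀, hA₁, hA₂, hmid]) fun h0 => ?_
    simpa [midpoint_eq_smul_add, hh.ne'] using congrArg Complex.im h0
end

section
/- Let Omega_n be a sequence of open convex subsets of a bounded convex open set Q in R^d whose characteristic functions converge in L^1(Q) to the characteristic function of an open convex set Omega. If u_n in H^1_0(Omega_n) are extended by zero to H^1_0(Q), are uniformly bounded in H^1_0(Q), and converge weakly to some u in H^1_0(Q), and each u_n weakly solves -Delta u_n = f on Omega_n with f in L^2(Q), and moreover for every epsilon > 0 there exists N such that the symmetric difference Omega_n triangle Omega is contained in the epsilon-neighborhood of the boundary of Omega for all n >= N, then u restricted to Omega satisfies the weak formulation of -Delta u = f on Omega, i.e. for every test function phi compactly supported in Omega one has integral of grad u . grad phi over Omega equals integral of f phi over Omega. -/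
open MeasureTheory Set
open scoped RealInnerProductSpace

-- Auxiliary: the gradient of a function vanishes outside its topological support.
lemma aux_grad_zero_off {d : ℕ} (φ : EuclideanSpace ℝ (Fin d) → ℝ)
    {x : EuclideanSpace ℝ (Fin d)} (hx : x ∉ tsupport φ) : gradient φ x = 0 := by
  have hev : φ =ᶠ[nhds x] (fun _ => (0:ℝ)) := by
    filter_upwards [isOpen_compl_iff.mpr (isClosed_tsupport φ) |>.mem_nhds hx] with y hy
    exact image_eq_zero_of_notMem_tsupport hy
  rw [gradient, hev.fderiv_eq, fderiv_const_apply, map_zero]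

-- Auxiliary: continuity of the gradient of a smooth function.
lemma aux_grad_cont {d : ℕ} (φ : EuclideanSpace ℝ (Fin d) → ℝ) (hφ : ContDiff ℝ (⊤ : ℕ∞) φ) :
    Continuous (gradient φ) :=
  (InnerProductSpace.toDual ℝ _).symm.continuous.comp (hφ.continuous_fderiv (by simp))

/-- stability of weak solutions of the Poisson problem under
convergence of convex domains. -/
theorem stmt_2 (d : ℕ)
    (Q : Set (EuclideanSpace ℝ (Fin d)))
    (hQopen : IsOpen Q) (hQbdd : Bornology.IsBounded Q) (hQconv : Convex ℝ Q)
    (Ωn : ℕ → Set (EuclideanSpace ℝ (Fin d)))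
    (hΩnopen : ∀ n, IsOpen (Ωn n)) (hΩnconv : ∀ n, Convex ℝ (Ωn n))
    (hΩnsub : ∀ n, Ωn n ⊆ Q)
    (Ω : Set (EuclideanSpace ℝ (Fin d)))
    (hΩopen : IsOpen Ω) (hΩconv : Convex ℝ Ω) (hΩsub : Ω ⊆ Q)
    -- characteristic functions converge in L¹(Q)
    (hchar : Filter.Tendsto
      (fun n => ∫ x in Q, |(Ωn n).indicator (fun _ => (1 : ℝ)) x -
        Ω.indicator (fun _ => (1 : ℝ)) x|) Filter.atTop (nhds 0))
    (f : EuclideanSpace ℝ (Fin d) → ℝ)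
    (hf : MemLp f 2 (volume.restrict Q))
    (u : ℕ → EuclideanSpace ℝ (Fin d) → ℝ)
    (u₀ : EuclideanSpace ℝ (Fin d) → ℝ)
    -- zero extension outside Ωn, resp. outside Ω
    (hzero : ∀ n, ∀ x ∉ Ωn n, u n x = 0)
    (hzero₀ : ∀ x ∉ Ω, u₀ x = 0)
    -- uniform bound in H¹₀(Q)
    (hbdd : ∃ C : ℝ, ∀ n,
      (∫ x in Q, (u n x) ^ 2) + (∫ x in Q, ‖gradient (u n) x‖ ^ 2) ≤ C)
    -- weak convergence in H¹₀(Q), tested with L² functions and fields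
    (hweakL2 : ∀ φ : EuclideanSpace ℝ (Fin d) → ℝ, MemLp φ 2 (volume.restrict Q) →
      Filter.Tendsto (fun n => ∫ x in Q, u n x * φ x) Filter.atTop
        (nhds (∫ x in Q, u₀ x * φ x)))
    (hweakgrad : ∀ Φ : EuclideanSpace ℝ (Fin d) → EuclideanSpace ℝ (Fin d),
      MemLp Φ 2 (volume.restrict Q) →
      Filter.Tendsto (fun n => ∫ x in Q, ⟪gradient (u n) x, Φ x⟫)
        Filter.atTop (nhds (∫ x in Q, ⟪gradient u₀ x, Φ x⟫)))
    -- each uₙ is a weak solution of -Δ uₙ = f on Ωn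
    (hsol : ∀ n, ∀ φ : EuclideanSpace ℝ (Fin d) → ℝ,
      ContDiff ℝ (⊤ : ℕ∞) φ → HasCompactSupport φ → tsupport φ ⊆ Ωn n →
      ∫ x in Ωn n, ⟪gradient (u n) x, gradient φ x⟫ = ∫ x in Ωn n, f x * φ x)
    -- uniform convergence of the symmetric differences towards ∂Ω
    (hsymm : ∀ ε : ℝ, 0 < ε → ∃ N : ℕ, ∀ n ≥ N,
      (Ωn n \ Ω) ∪ (Ω \ Ωn n) ⊆
        {x ∈ Q | Metric.infDist x (frontier Ω) ≤ ε}) :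
    -- then u₀ is a weak solution of -Δ u = f on Ω
    ∀ φ : EuclideanSpace ℝ (Fin d) → ℝ,
      ContDiff ℝ (⊤ : ℕ∞) φ → HasCompactSupport φ → tsupport φ ⊆ Ω →
      ∫ x in Ω, ⟪gradient u₀ x, gradient φ x⟫ = ∫ x in Ω, f x * φ x := by
  intro φ hφ hφc hφsupp
  have hK : IsCompact (tsupport φ) := hφc
  have hgradφ : ∀ x ∉ tsupport φ, gradient φ x = 0 := fun x hx => aux_grad_zero_off φ hx
  have hφz : ∀ x ∉ tsupport φ, φ x = 0 := fun x hx => image_eq_zero_of_notMem_tsupport hx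
  -- reduce set integrals to integrals over the whole space
  have key : ∀ (S : Set (EuclideanSpace ℝ (Fin d))) (g : EuclideanSpace ℝ (Fin d) → ℝ),
      tsupport φ ⊆ S → (∀ x ∉ tsupport φ, g x = 0) → ∫ x in S, g x = ∫ x, g x :=
    fun S g hKS hg => setIntegral_eq_integral_of_forall_compl_eq_zero
      (fun x hx => hg x (fun h => hx (hKS h)))
  obtain ⟨δ, δpos, hδ⟩ := hK.exists_thickening_subset_open hΩopen hφsupp
  rcases eq_empty_or_nonempty (tsupport φ) with hKe | hKne
  · -- φ ≡ 0 : both sides vanish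
    have hφ0 : φ = 0 := tsupport_eq_empty_iff.mp hKe
    have hg : ∀ x, gradient φ x = 0 := fun x =>
      hgradφ x (by rw [hKe]; exact notMem_empty x)
    have hL : (fun x => (⟪gradient u₀ x, gradient φ x⟫ : ℝ)) = fun _ => 0 := by
      funext x; rw [hg x, inner_zero_right]
    have hR : (fun x => f x * φ x) = fun _ => 0 := by
      funext x; rw [hφ0]; simp
    rw [hL, hR]
  rcases eq_empty_or_nonempty (frontier Ω) with hF | hF
  · -- degenerate case: Ω is clopen and nonempty, hence the whole (bounded) space
    have hΩuniv : Ω = univ :=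
      (isClopen_iff_frontier_eq_empty.mpr hF).eq_univ (hKne.mono hφsupp)
    have hQuniv : Q = univ := eq_univ_of_univ_subset (hΩuniv ▸ hΩsub)
    have hbd : Bornology.IsBounded (univ : Set (EuclideanSpace ℝ (Fin d))) :=
      hQuniv ▸ hQbdd
    obtain ⟨R, hR⟩ := isBounded_iff_forall_norm_le.mp hbd
    have hsub : ∀ v : EuclideanSpace ℝ (Fin d), v = 0 := by
      intro v; by_contra hv
      have hvn : 0 < ‖v‖ := norm_pos_iff.mpr hv
      have hR0 : 0 ≤ R := le_trans (norm_nonneg (0 : EuclideanSpace ℝ (Fin d)))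
        (hR 0 (mem_univ _))
      have h1 := hR (((R + 1) / ‖v‖) • v) (mem_univ _)
      rw [norm_smul, Real.norm_eq_abs, abs_of_nonneg (by positivity),
        div_mul_cancel₀ _ (ne_of_gt hvn)] at h1
      linarith
    -- volume of Q is positive and finite
    have hQpos : 0 < (volume Q).toReal := by
      refine ENNReal.toReal_pos ?_ hQbdd.measure_lt_top.ne
      exact (hQopen.measure_pos volume ⟨_, hQuniv ▸ mem_univ default⟩).ne'
    -- find n with Ωn n = univ
    obtain ⟨n, hn⟩ : ∃ n, Ωn n = univ := by
      by_contra h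
      push_neg at h
      have hval : ∀ n, (∫ x in Q, |(Ωn n).indicator (fun _ => (1:ℝ)) x -
          Ω.indicator (fun _ => (1:ℝ)) x|) = (volume Q).toReal := by
        intro n
        have hΩn : Ωn n = ∅ := by
          rcases (Ωn n).eq_empty_or_nonempty with h'|h'
          · exact h'
          · exact absurd (eq_univ_of_forall fun x =>
              (hsub x).symm ▸ (hsub h'.choose ▸ h'.choose_spec)) (h n)
        rw [hΩn, hΩuniv]
        simp only [indicator_empty, indicator_univ, Pi.zero_apply, zero_sub, abs_neg, abs_one]
        rw [setIntegral_const, smul_eq_mul, mul_one]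
        rfl
      have hconst : Filter.Tendsto (fun _ : ℕ => (volume Q).toReal)
          Filter.atTop (nhds 0) := by
        refine hchar.congr fun n => hval n
      have := tendsto_nhds_unique hconst tendsto_const_nhds
      linarith
    have h1 := hsol n φ hφ hφc (hn ▸ subset_univ _)
    rw [hn] at h1
    have hz : ∀ w : EuclideanSpace ℝ (Fin d) → ℝ,
        (fun x => (⟪gradient w x, gradient φ x⟫ : ℝ)) = fun _ => 0 := by
      intro w; funext x; rw [hsub (gradient φ x), inner_zero_right]
    rw [hz (u n), integral_zero] at h1
    rw [hΩuniv, hz u₀, integral_zero]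
    rw [Measure.restrict_univ] at h1 ⊢
    exact h1
  · -- main case: frontier Ω nonempty
    have hdist : ∀ x ∈ tsupport φ, δ ≤ Metric.infDist x (frontier Ω) := by
      intro x hx
      by_contra h
      push_neg at h
      obtain ⟨y, hyF, hy⟩ := (Metric.infDist_lt_iff hF).mp h
      have hyth : y ∈ Metric.thickening δ (tsupport φ) :=
        Metric.mem_thickening_iff.mpr ⟨x, hx, by rwa [dist_comm]⟩
      have hyΩ : y ∈ Ω := hδ hyth
      rw [hΩopen.frontier_eq] at hyF
      exact hyF.2 hyΩ
    obtain ⟨N, hN⟩ := hsymm (δ / 2) (by linarith)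
    have hKsub : ∀ n ≥ N, tsupport φ ⊆ Ωn n := by
      intro n hn x hx
      by_contra hxn
      have hmem := hN n hn (Or.inr ⟨hφsupp hx, hxn⟩)
      have h2 := hmem.2
      have h3 := hdist x hx
      linarith
    -- the test field ∇φ is in L²(Q)
    haveI hQfin : IsFiniteMeasure (volume.restrict Q) :=
      ⟨by rw [Measure.restrict_apply_univ]; exact hQbdd.measure_lt_top⟩
    have hgc : Continuous (gradient φ) := aux_grad_cont φ hφ
    have hgsupp : HasCompactSupport (gradient φ) := HasCompactSupport.intro hK hgradφ
    have hΦ : MemLp (gradient φ) 2 (volume.restrict Q) :=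
      (hgc.memLp_top_of_hasCompactSupport hgsupp _).mono_exponent le_top
    have htend := hweakgrad (gradient φ) hΦ
    -- for n ≥ N the weak formulation transfers to Q
    have hconst : ∀ n ≥ N,
        (∫ x in Q, ⟪gradient (u n) x, gradient φ x⟫) = ∫ x in Ω, f x * φ x := by
      intro n hn
      have hz1 : ∀ x ∉ tsupport φ, (⟪gradient (u n) x, gradient φ x⟫ : ℝ) = 0 :=
        fun x hx => by rw [hgradφ x hx, inner_zero_right]
      have hz2 : ∀ x ∉ tsupport φ, f x * φ x = 0 :=
        fun x hx => by rw [hφz x hx, mul_zero]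
      have e1 := key Q (fun x => ⟪gradient (u n) x, gradient φ x⟫)
        (hφsupp.trans hΩsub) hz1
      have e2 := key (Ωn n) (fun x => ⟪gradient (u n) x, gradient φ x⟫) (hKsub n hn) hz1
      have e3 := hsol n φ hφ hφc (hKsub n hn)
      have e4 := key (Ωn n) (fun x => f x * φ x) (hKsub n hn) hz2
      have e5 := key Ω (fun x => f x * φ x) hφsupp hz2
      rw [e1, ← e2, e3, e4, ← e5]
    have hev : (fun n => ∫ x in Q, ⟪gradient (u n) x, gradient φ x⟫) =ᶠ[Filter.atTop]
        (fun _ => ∫ x in Ω, f x * φ x) :=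
      Filter.eventually_atTop.mpr ⟨N, hconst⟩
    have hlim : Filter.Tendsto (fun _ : ℕ => ∫ x in Ω, f x * φ x) Filter.atTop
        (nhds (∫ x in Q, ⟪gradient u₀ x, gradient φ x⟫)) := htend.congr' hev
    have hfinal := tendsto_nhds_unique hlim tendsto_const_nhds
    have hz0 : ∀ x ∉ tsupport φ, (⟪gradient u₀ x, gradient φ x⟫ : ℝ) = 0 :=
      fun x hx => by rw [hgradφ x hx, inner_zero_right]
    have e6 := key Ω (fun x => ⟪gradient u₀ x, gradient φ x⟫) hφsupp hz0
    have e7 := key Q (fun x => ⟪gradient u₀ x, gradient φ x⟫) (hφsupp.trans hΩsub) hz0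
    rw [e6, ← e7, hfinal]
end

section
/- In the setting of the merit-function derivative: suppose phi'(0) = L + M ( sum_{i : C_i = 0} max(D_i, 0) + sum_{i : C_i > 0} D_i ) with real numbers L, C_i, D_i satisfying: (a) for every i, C_i + t0 D_i <= 0 for some fixed t0 > 0 (feasibility of the linearized constraint), and (b) L + sum_i lambda_i t0 D_i = -e for some e > 0 and nonnegative lambda_i with lambda_i (C_i + t0 D_i) = 0, and (c) M >= t0 * max_i lambda_i. Then phi'(0) < 0. -/
open Finset

/-
Feasibility `C i + t0 D i ≤ 0` forces `D i ≤ 0` wherever `C i ≥ 0`, so the `max` terms vanish and,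
since `M ≥ t0 λ i`, each `M D i` with `C i > 0` is at most `λ i t0 D i`. The remaining terms
`λ i t0 D i` with `C i ≤ 0` are nonnegative by complementary slackness (either `λ i = 0` or
`t0 D i = -C i`). Hence the derivative is at most `L + ∑ λ i t0 D i = -e`.
-/

lemma nonpos_of_add_mul_nonpos {c t d : ℝ} (hc : 0 ≤ c) (ht : 0 < t) (h : c + t * d ≤ 0) :
    d ≤ 0 :=
  nonpos_of_mul_nonpos_right (by linarith) ht

section LinearizedConstraints

variable {ι : Type*} (s : Finset ι) {C D lam : ι → ℝ} {t0 : ℝ}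

lemma sum_filter_eq_zero_max_zero_eq_zero (ht0 : 0 < t0) (hfeas : ∀ i ∈ s, C i + t0 * D i ≤ 0) :
    ∑ i ∈ s.filter (fun i => C i = 0), max (D i) 0 = 0 := by
  refine sum_eq_zero fun i hi => ?_
  obtain ⟨his, hC⟩ := mem_filter.mp hi
  exact max_eq_right (nonpos_of_add_mul_nonpos hC.ge ht0 (hfeas i his))

lemma mul_sum_filter_pos_le {M : ℝ} (ht0 : 0 < t0) (hfeas : ∀ i ∈ s, C i + t0 * D i ≤ 0)
    (hMbig : ∀ i ∈ s, t0 * lam i ≤ M) :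
    M * ∑ i ∈ s.filter (fun i => 0 < C i), D i
      ≤ ∑ i ∈ s.filter (fun i => 0 < C i), lam i * (t0 * D i) := by
  rw [mul_sum]
  refine sum_le_sum fun i hi => ?_
  obtain ⟨his, hC⟩ := mem_filter.mp hi
  have hD := nonpos_of_add_mul_nonpos hC.le ht0 (hfeas i his)
  calc M * D i ≤ t0 * lam i * D i := mul_le_mul_of_nonpos_right (hMbig i his) hD
    _ = lam i * (t0 * D i) := by ring

lemma sum_filter_pos_le_sum (hlam : ∀ i ∈ s, 0 ≤ lam i)
    (hcompl : ∀ i ∈ s, lam i * (C i + t0 * D i) = 0) :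
    ∑ i ∈ s.filter (fun i => 0 < C i), lam i * (t0 * D i) ≤ ∑ i ∈ s, lam i * (t0 * D i) := by
  refine sum_le_sum_of_subset_of_nonneg (filter_subset _ _) fun i his hi => ?_
  have hC : C i ≤ 0 := not_lt.mp fun h => hi (mem_filter.mpr ⟨his, h⟩)
  rcases mul_eq_zero.mp (hcompl i his) with hl | hslack
  · simp [hl]
  · have : t0 * D i = -C i := by linarith
    rw [this]
    exact mul_nonneg (hlam i his) (neg_nonneg.mpr hC)

end LinearizedConstraints

theorem stmt_9_general (N : ℕ) (L e t0 M : ℝ) (C D lam : Fin N → ℝ)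
    (ht0 : 0 < t0) (he : 0 < e)
    -- (a) feasibility of the linearized constraints
    (hfeas : ∀ i, C i + t0 * D i ≤ 0)
    -- (b) stationarity identity and multiplier conditions
    (hstat : L + (∑ i, lam i * (t0 * D i)) = -e)
    (hlam : ∀ i, 0 ≤ lam i)
    (hcompl : ∀ i, lam i * (C i + t0 * D i) = 0)
    -- (c) M dominates the multipliers
    (hMbig : ∀ i, t0 * lam i ≤ M) :
    L + M * ((∑ i ∈ Finset.univ.filter (fun i => C i = 0), max (D i) 0)
      + ∑ i ∈ Finset.univ.filter (fun i => 0 < C i), D i) < 0 := by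
  rw [sum_filter_eq_zero_max_zero_eq_zero _ ht0 fun i _ => hfeas i, zero_add]
  have hpos := mul_sum_filter_pos_le univ ht0 (fun i _ => hfeas i) fun i _ => hMbig i
  have hrest := sum_filter_pos_le_sum univ (fun i _ => hlam i) fun i _ => hcompl i
  linarith

/-- Lemma 5.1 reduced to real arithmetic: the merit function has a
negative right derivative provided the penalty parameter `M` is large enough. -/
theorem stmt_9 (N : ℕ) (L e t0 M : ℝ) (C D lam : Fin N → ℝ)
    (ht0 : 0 < t0) (he : 0 < e) (hM : 0 < M)
    -- (a) feasibility of the linearized constraints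
    (hfeas : ∀ i, C i + t0 * D i ≤ 0)
    -- (b) stationarity identity and multiplier conditions
    (hstat : L + (∑ i, lam i * (t0 * D i)) = -e)
    (hlam : ∀ i, 0 ≤ lam i)
    (hcompl : ∀ i, lam i * (C i + t0 * D i) = 0)
    -- (c) M dominates the multipliers
    (hMbig : ∀ i, t0 * lam i ≤ M) :
    L + M * ((∑ i ∈ Finset.univ.filter (fun i => C i = 0), max (D i) 0)
      + ∑ i ∈ Finset.univ.filter (fun i => 0 < C i), D i) < 0 :=
  stmt_9_general N L e t0 M C D lam ht0 he hfeas hstat hlam hcompl hMbig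
end
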